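/- For every fixed t ∈ [0,1] the Quicksort process cost function has mean zero under the uniform distribution in its second argument: ∫_0^1 C(t,x) dx = 0. -/

import Mathlib

open MeasureTheory ProbabilityTheory Filter Finset

noncomputable section

/-- The Quicksort cost function `C(x) = 1 + 2x·ln x + 2(1-x)·ln(1-x)`
(with `Real.log 0 = 0`, encoding the convention `0·ln 0 = 0`). -/
def Cq (x : ℝ) : ℝ := 1 + 2 * x * Real.log x + 2 * (1 - x) * Real.log (1 - x)

/-- The Quicksort process cost function
`C(t,x) = C(x) + 2·1_{t<x}·(−1 + x + (1−t)ln(1−t) − (1−x)ln(1−x) − (x−t)ln(x−t))`. -/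
def Cqt (t x : ℝ) : ℝ :=
  Cq x + 2 * (if t < x then
    (-1 + x + (1 - t) * Real.log (1 - t) - (1 - x) * Real.log (1 - x)
      - (x - t) * Real.log (x - t)) else 0)

/-! Everything reduces to the primitive `∫₀ᶜ u log u = c²/2 · log c - c²/4`. It gives
`∫₀¹ C = 1 - 2·¼ - 2·¼ = 0`. For the correction term, supported on `(t, 1]`, put `s = 1 - t`:
both `∫ₜ¹ (1-x) log (1-x)` and `∫ₜ¹ (x-t) log (x-t)` equal `s²/2 · log s - s²/4`, and twice this
cancels `∫ₜ¹ (-1 + x + s log s) = -s²/2 + s² log s`. -/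

open Real

theorem integral_mul_log_from_zero (c : ℝ) :
    ∫ x in (0 : ℝ)..c, x * log x = c ^ 2 / 2 * log c - c ^ 2 / 4 := by
  have hderiv : ∀ x ∈ Set.Ioo (min 0 c) (max 0 c), HasDerivWithinAt
      (fun x => x / 2 * (x * log x) - x ^ 2 / 4) (x * log x) (Set.Ioi x) x := by
    intro x hx
    have hx0 : x ≠ 0 := by
      rintro rfl
      rcases le_total 0 c with h | h <;> simp_all
    have := (((hasDerivAt_id' x).div_const 2).fun_mul (hasDerivAt_mul_log hx0)).fun_sub
      ((hasDerivAt_pow 2 x).div_const 4)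
    refine (this.congr_deriv ?_).hasDerivWithinAt
    norm_num
    ring
  rw [intervalIntegral.integral_eq_sub_of_hasDeriv_right (by fun_prop) hderiv
    (continuous_mul_log.intervalIntegrable 0 c)]
  ring

theorem integral_one_sub_mul_log_one_sub (a : ℝ) :
    ∫ x in a..1, (1 - x) * log (1 - x) = (1 - a) ^ 2 / 2 * log (1 - a) - (1 - a) ^ 2 / 4 := by
  rw [intervalIntegral.integral_comp_sub_left (fun u => u * log u), sub_self,
    integral_mul_log_from_zero]

theorem integral_sub_mul_log_sub (t b : ℝ) :
    ∫ x in t..b, (x - t) * log (x - t) = (b - t) ^ 2 / 2 * log (b - t) - (b - t) ^ 2 / 4 := by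
  rw [intervalIntegral.integral_comp_sub_right (fun u => u * log u), sub_self,
    integral_mul_log_from_zero]

theorem intervalIntegral.integral_indicator_Ioi {E : Type*} [NormedAddCommGroup E]
    [NormedSpace ℝ E] {μ : Measure ℝ} {f : ℝ → E} {a₁ a₂ a₃ : ℝ} (h : a₂ ∈ Set.Icc a₁ a₃) :
    ∫ x in a₁..a₃, (Set.Ioi a₂).indicator f x ∂μ = ∫ x in a₂..a₃, f x ∂μ := by
  rw [integral_of_le (h.1.trans h.2), integral_of_le h.2,
    MeasureTheory.integral_indicator measurableSet_Ioi, Measure.restrict_restrict measurableSet_Ioi,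
    Set.inter_comm, Set.Ioc_inter_Ioi, sup_of_le_right h.1]

theorem Cq_eq_add_mul_log (x : ℝ) :
    Cq x = 1 + 2 * (x * log x) + 2 * ((1 - x) * log (1 - x)) := by
  unfold Cq
  ring

theorem continuous_Cq : Continuous Cq := by
  simp_rw [funext Cq_eq_add_mul_log]
  fun_prop

theorem integral_Cq : ∫ x in (0 : ℝ)..1, Cq x = 0 := by
  simp_rw [Cq_eq_add_mul_log]
  rw [intervalIntegral.integral_add, intervalIntegral.integral_add,
    intervalIntegral.integral_const_mul, intervalIntegral.integral_const_mul,
    integral_mul_log_from_zero, integral_one_sub_mul_log_one_sub]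
  · norm_num
  all_goals exact Continuous.intervalIntegrable (by fun_prop) _ _

def quicksortCorrection (t x : ℝ) : ℝ :=
  -1 + x + (1 - t) * log (1 - t) - (1 - x) * log (1 - x) - (x - t) * log (x - t)

theorem Cqt_eq_add_indicator (t x : ℝ) :
    Cqt t x = Cq x + 2 * (Set.Ioi t).indicator (quicksortCorrection t) x := by
  simp only [Cqt, quicksortCorrection, Set.indicator_apply, Set.mem_Ioi]

theorem continuous_quicksortCorrection (t : ℝ) : Continuous (quicksortCorrection t) := by
  unfold quicksortCorrection
  fun_prop

theorem integral_quicksortCorrection (t : ℝ) : ∫ x in t..1, quicksortCorrection t x = 0 := by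
  unfold quicksortCorrection
  rw [intervalIntegral.integral_sub, intervalIntegral.integral_sub, intervalIntegral.integral_add,
    intervalIntegral.integral_add, intervalIntegral.integral_const, intervalIntegral.integral_const,
    integral_id, integral_one_sub_mul_log_one_sub, integral_sub_mul_log_sub, smul_eq_mul,
    smul_eq_mul]
  · ring
  all_goals exact Continuous.intervalIntegrable (by fun_prop) _ _

theorem quicksort_process_cost_mean_zero :
    ∀ t ∈ Set.Icc (0 : ℝ) 1, (∫ x in (0 : ℝ)..1, Cqt t x) = 0 := by
  intro t ht
  have hint : IntervalIntegrable ((Set.Ioi t).indicator (quicksortCorrection t)) volume 0 1 := by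
    rw [intervalIntegrable_iff_integrableOn_Ioc_of_le zero_le_one]
    exact ((continuous_quicksortCorrection t).intervalIntegrable 0 1).1.indicator measurableSet_Ioi
  simp_rw [Cqt_eq_add_indicator]
  rw [intervalIntegral.integral_add (continuous_Cq.intervalIntegrable 0 1) (hint.const_mul 2),
    intervalIntegral.integral_const_mul, intervalIntegral.integral_indicator_Ioi ht, integral_Cq,
    integral_quicksortCorrection]
  norm_num

end
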